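/- arXiv:2504.11351 — 3 statements merged into one kernel-verified Lean document; each statement's English description precedes it below -/
import Mathlib

section
/- For F(u,v) = (u,v,f) and V(u,v) = (-kv, ku, n), the isotropic Gaussian curvature of F + tV expands as K(F + tV) = K(F) + t·(f_uu n_vv - 2 f_uv n_uv + f_vv n_uu) + t²·(n_uu n_vv - n_uv²); in particular the derivative of K(F+tV) at t = 0 vanishes identically if and only if the mixed Gaussian curvature K(F,V) = ½(f_uu n_vv - 2 f_uv n_uv + f_vv n_uu) vanishes identically. -/
noncomputable section

/-- Partial derivative in the `u` direction. -/
def pu {E : Type*} [NormedAddCommGroup E] [NormedSpace ℝ E]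
    (f : ℝ × ℝ → E) (p : ℝ × ℝ) : E := fderiv ℝ f p (1, 0)

/-- Partial derivative in the `v` direction. -/
def pv {E : Type*} [NormedAddCommGroup E] [NormedSpace ℝ E]
    (f : ℝ × ℝ → E) (p : ℝ × ℝ) : E := fderiv ℝ f p (0, 1)

/-- Dot product in the plane. -/
def dot2 (a b : ℝ × ℝ) : ℝ := a.1 * b.1 + a.2 * b.2

/-- Dot product in space. -/
def dot3 (a b : ℝ × ℝ × ℝ) : ℝ := a.1 * b.1 + a.2.1 * b.2.1 + a.2.2 * b.2.2

/-- Determinant of three vectors in space. -/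
def det3 (a b c : ℝ × ℝ × ℝ) : ℝ :=
  a.1 * (b.2.1 * c.2.2 - b.2.2 * c.2.1)
    - a.2.1 * (b.1 * c.2.2 - b.2.2 * c.1)
    + a.2.2 * (b.1 * c.2.1 - b.2.1 * c.1)

/-- Top view of a space vector. -/
def tv (w : ℝ × ℝ × ℝ) : ℝ × ℝ := (w.1, w.2.1)

/-- Isotropic Gaussian curvature of a general parametrized surface. -/
def Kgen (g : ℝ × ℝ → ℝ × ℝ × ℝ) (p : ℝ × ℝ) : ℝ :=
  (det3 (pu g p) (pv g p) (pu (pu g) p) * det3 (pu g p) (pv g p) (pv (pv g) p)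
      - (det3 (pu g p) (pv g p) (pv (pu g) p)) ^ 2) /
    (dot2 (tv (pu g p)) (tv (pu g p)) * dot2 (tv (pv g p)) (tv (pv g p))
      - (dot2 (tv (pu g p)) (tv (pv g p))) ^ 2)

/-- Isotropic mean curvature of a general parametrized surface. -/
def Hgen (g : ℝ × ℝ → ℝ × ℝ × ℝ) (p : ℝ × ℝ) : ℝ :=
  (dot2 (tv (pu g p)) (tv (pu g p)) * det3 (pu g p) (pv g p) (pv (pv g) p)
      - 2 * dot2 (tv (pu g p)) (tv (pv g p)) * det3 (pu g p) (pv g p) (pv (pu g) p)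
      + dot2 (tv (pv g p)) (tv (pv g p)) * det3 (pu g p) (pv g p) (pu (pu g) p)) /
    (2 * (dot2 (tv (pu g p)) (tv (pu g p)) * dot2 (tv (pv g p)) (tv (pv g p))
      - (dot2 (tv (pu g p)) (tv (pv g p))) ^ 2))

/-- Isotropic Gaussian curvature of a graph surface `(u,v,f(u,v))`. -/
def Kgr (f : ℝ × ℝ → ℝ) (p : ℝ × ℝ) : ℝ :=
  pu (pu f) p * pv (pv f) p - (pv (pu f) p) ^ 2

/-- Isotropic mean curvature of a graph surface. -/
def Hgr (f : ℝ × ℝ → ℝ) (p : ℝ × ℝ) : ℝ :=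
  (pu (pu f) p + pv (pv f) p) / 2

/-- Mixed isotropic Gaussian curvature of two graph surfaces. -/
def Kmix (f g : ℝ × ℝ → ℝ) (p : ℝ × ℝ) : ℝ :=
  (pu (pu f) p * pv (pv g) p - 2 * pv (pu f) p * pv (pu g) p
    + pv (pv f) p * pu (pu g) p) / 2


/-- The deformation `F + tV` of `F = (u,v,f)` by `V = (-k v, k u, n)`. -/
def defo (f n : ℝ × ℝ → ℝ) (k t : ℝ) : ℝ × ℝ → ℝ × ℝ × ℝ :=
  fun q => (q.1 - t * k * q.2, q.2 + t * k * q.1, f q + t * n q)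

section Aux

lemma pu_smooth' (f : ℝ × ℝ → ℝ) (hf : ContDiff ℝ (⊤ : ℕ∞) f) : ContDiff ℝ (⊤ : ℕ∞) (pu f) :=
  (hf.fderiv_right (by simp)).clm_apply contDiff_const

lemma pv_smooth' (f : ℝ × ℝ → ℝ) (hf : ContDiff ℝ (⊤ : ℕ∞) f) : ContDiff ℝ (⊤ : ℕ∞) (pv f) :=
  (hf.fderiv_right (by simp)).clm_apply contDiff_const

lemma pu_prod3 (a b c : ℝ × ℝ → ℝ) (p : ℝ × ℝ) (ha : DifferentiableAt ℝ a p)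
    (hb : DifferentiableAt ℝ b p) (hc : DifferentiableAt ℝ c p) :
    pu (fun q => (a q, b q, c q)) p = (pu a p, pu b p, pu c p) := by
  unfold pu
  rw [DifferentiableAt.fderiv_prodMk ha (hb.prodMk hc), DifferentiableAt.fderiv_prodMk hb hc]; rfl

lemma pv_prod3 (a b c : ℝ × ℝ → ℝ) (p : ℝ × ℝ) (ha : DifferentiableAt ℝ a p)
    (hb : DifferentiableAt ℝ b p) (hc : DifferentiableAt ℝ c p) :
    pv (fun q => (a q, b q, c q)) p = (pv a p, pv b p, pv c p) := by
  unfold pv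
  rw [DifferentiableAt.fderiv_prodMk ha (hb.prodMk hc), DifferentiableAt.fderiv_prodMk hb hc]; rfl

lemma pu_comb (t : ℝ) (f n : ℝ × ℝ → ℝ) (p : ℝ × ℝ) (hf : DifferentiableAt ℝ f p)
    (hn : DifferentiableAt ℝ n p) :
    pu (fun q => f q + t * n q) p = pu f p + t * pu n p := by
  unfold pu; rw [fderiv_fun_add hf (hn.const_mul t), fderiv_const_mul hn]; simp

lemma pv_comb (t : ℝ) (f n : ℝ × ℝ → ℝ) (p : ℝ × ℝ) (hf : DifferentiableAt ℝ f p)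
    (hn : DifferentiableAt ℝ n p) :
    pv (fun q => f q + t * n q) p = pv f p + t * pv n p := by
  unfold pv; rw [fderiv_fun_add hf (hn.const_mul t), fderiv_const_mul hn]; simp

lemma pu_defo (f n : ℝ × ℝ → ℝ) (k t : ℝ) (hf : ContDiff ℝ (⊤ : ℕ∞) f) (hn : ContDiff ℝ (⊤ : ℕ∞) n) :
    pu (defo f n k t) = fun p => ((1:ℝ), t * k, pu f p + t * pu n p) := by
  funext p
  have h1 : DifferentiableAt ℝ (fun q : ℝ × ℝ => q.1 - t * k * q.2) p :=
    differentiableAt_fst.sub (differentiableAt_snd.const_mul _)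
  have h2 : DifferentiableAt ℝ (fun q : ℝ × ℝ => q.2 + t * k * q.1) p :=
    differentiableAt_snd.add (differentiableAt_fst.const_mul _)
  have h3 : DifferentiableAt ℝ (fun q => f q + t * n q) p :=
    (hf.differentiable (by simp) p).add ((hn.differentiable (by simp) p).const_mul t)
  rw [show defo f n k t = fun q => ((fun q : ℝ × ℝ => q.1 - t*k*q.2) q,
      (fun q : ℝ × ℝ => q.2 + t*k*q.1) q, (fun q => f q + t * n q) q) from rfl,
    pu_prod3 _ _ _ p h1 h2 h3,
    pu_comb t f n p (hf.differentiable (by simp) p) (hn.differentiable (by simp) p)]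
  unfold pu
  rw [fderiv_fun_sub differentiableAt_fst (differentiableAt_snd.const_mul _),
    fderiv_fun_add differentiableAt_snd (differentiableAt_fst.const_mul _),
    fderiv_const_mul differentiableAt_snd, fderiv_const_mul differentiableAt_fst]
  simp [fderiv_fst, fderiv_snd]

lemma pv_defo (f n : ℝ × ℝ → ℝ) (k t : ℝ) (hf : ContDiff ℝ (⊤ : ℕ∞) f) (hn : ContDiff ℝ (⊤ : ℕ∞) n) :
    pv (defo f n k t) = fun p => (-(t * k), (1:ℝ), pv f p + t * pv n p) := by
  funext p
  have h1 : DifferentiableAt ℝ (fun q : ℝ × ℝ => q.1 - t * k * q.2) p :=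
    differentiableAt_fst.sub (differentiableAt_snd.const_mul _)
  have h2 : DifferentiableAt ℝ (fun q : ℝ × ℝ => q.2 + t * k * q.1) p :=
    differentiableAt_snd.add (differentiableAt_fst.const_mul _)
  have h3 : DifferentiableAt ℝ (fun q => f q + t * n q) p :=
    (hf.differentiable (by simp) p).add ((hn.differentiable (by simp) p).const_mul t)
  rw [show defo f n k t = fun q => ((fun q : ℝ × ℝ => q.1 - t*k*q.2) q,
      (fun q : ℝ × ℝ => q.2 + t*k*q.1) q, (fun q => f q + t * n q) q) from rfl,
    pv_prod3 _ _ _ p h1 h2 h3,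
    pv_comb t f n p (hf.differentiable (by simp) p) (hn.differentiable (by simp) p)]
  unfold pv
  rw [fderiv_fun_sub differentiableAt_fst (differentiableAt_snd.const_mul _),
    fderiv_fun_add differentiableAt_snd (differentiableAt_fst.const_mul _),
    fderiv_const_mul differentiableAt_snd, fderiv_const_mul differentiableAt_fst]
  simp [fderiv_fst, fderiv_snd]

lemma pu_second (c1 c2 : ℝ) (h : ℝ × ℝ → ℝ) (hh : ContDiff ℝ (⊤ : ℕ∞) h) (p : ℝ × ℝ) :
    pu (fun q => (c1, c2, h q)) p = (0, 0, pu h p) := by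
  rw [show (fun q : ℝ × ℝ => (c1, c2, h q)) = fun q => ((fun _ : ℝ × ℝ => c1) q,
      (fun _ : ℝ × ℝ => c2) q, h q) from rfl,
    pu_prod3 _ _ _ p (differentiableAt_const _) (differentiableAt_const _)
      (hh.differentiable (by simp) p)]
  simp [pu]

lemma pv_second (c1 c2 : ℝ) (h : ℝ × ℝ → ℝ) (hh : ContDiff ℝ (⊤ : ℕ∞) h) (p : ℝ × ℝ) :
    pv (fun q => (c1, c2, h q)) p = (0, 0, pv h p) := by
  rw [show (fun q : ℝ × ℝ => (c1, c2, h q)) = fun q => ((fun _ : ℝ × ℝ => c1) q,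
      (fun _ : ℝ × ℝ => c2) q, h q) from rfl,
    pv_prod3 _ _ _ p (differentiableAt_const _) (differentiableAt_const _)
      (hh.differentiable (by simp) p)]
  simp [pv]

lemma Kgen_defo (f n : ℝ × ℝ → ℝ) (k : ℝ)
    (hf : ContDiff ℝ (⊤ : ℕ∞) f) (hn : ContDiff ℝ (⊤ : ℕ∞) n) (t : ℝ) (p : ℝ × ℝ) :
    Kgen (defo f n k t) p
      = Kgr f p
        + t * (pu (pu f) p * pv (pv n) p - 2 * pv (pu f) p * pv (pu n) p
            + pv (pv f) p * pu (pu n) p)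
        + t ^ 2 * Kgr n p := by
  have hfu := pu_smooth' f hf
  have hfv := pv_smooth' f hf
  have hnu := pu_smooth' n hn
  have hnv := pv_smooth' n hn
  have hu : ContDiff ℝ (⊤ : ℕ∞) (fun q => pu f q + t * pu n q) := hfu.add (contDiff_const.mul hnu)
  have hv : ContDiff ℝ (⊤ : ℕ∞) (fun q => pv f q + t * pv n q) := hfv.add (contDiff_const.mul hnv)
  have e1 := pu_defo f n k t hf hn
  have e2 := pv_defo f n k t hf hn
  have e3 : pu (pu (defo f n k t)) p = (0, 0, pu (pu f) p + t * pu (pu n) p) := by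
    rw [e1, pu_second _ _ _ hu p,
      pu_comb t (pu f) (pu n) p (hfu.differentiable (by simp) p) (hnu.differentiable (by simp) p)]
  have e4 : pv (pu (defo f n k t)) p = (0, 0, pv (pu f) p + t * pv (pu n) p) := by
    rw [e1, pv_second _ _ _ hu p,
      pv_comb t (pu f) (pu n) p (hfu.differentiable (by simp) p) (hnu.differentiable (by simp) p)]
  have e5 : pv (pv (defo f n k t)) p = (0, 0, pv (pv f) p + t * pv (pv n) p) := by
    rw [e2, pv_second _ _ _ hv p,
      pv_comb t (pv f) (pv n) p (hfv.differentiable (by simp) p) (hnv.differentiable (by simp) p)]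
  have hne : (1 + t * k * (t * k)) ≠ 0 := by nlinarith [sq_nonneg (t * k)]
  rw [Kgen, e3, e4, e5, e1, e2]
  simp only [det3, dot2, tv, Kgr]
  rw [div_eq_iff (by nlinarith [sq_nonneg (t * k)])]
  ring

end Aux

/-- The isotropic Gaussian curvature of `F + tV` expands as
`K(F+tV) = K(F) + t (f_uu n_vv - 2 f_uv n_uv + f_vv n_uu) + t² (n_uu n_vv - n_uv²)`;
in particular, `(d/dt) K(F+tV)|₀ ≡ 0` iff the mixed Gaussian curvature
`K(F,V) = ½(f_uu n_vv - 2 f_uv n_uv + f_vv n_uu)` vanishes identically. -/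


theorem stmt_12 (f n : ℝ × ℝ → ℝ) (k : ℝ)
    (hf : ContDiff ℝ (⊤ : ℕ∞) f) (hn : ContDiff ℝ (⊤ : ℕ∞) n) :
    (∀ (t : ℝ) (p : ℝ × ℝ),
      Kgen (defo f n k t) p
        = Kgr f p
          + t * (pu (pu f) p * pv (pv n) p - 2 * pv (pu f) p * pv (pu n) p
              + pv (pv f) p * pu (pu n) p)
          + t ^ 2 * Kgr n p) ∧
    ((∀ p : ℝ × ℝ, deriv (fun t => Kgen (defo f n k t) p) 0 = 0) ↔
      (∀ p : ℝ × ℝ, Kmix f n p = 0)) := by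
  constructor
  · exact fun t p => Kgen_defo f n k hf hn t p
  · have hd : ∀ p : ℝ × ℝ, deriv (fun t => Kgen (defo f n k t) p) 0 = 2 * Kmix f n p := by
      intro p
      have hfn : (fun t => Kgen (defo f n k t) p)
          = fun t => Kgr f p
            + t * (pu (pu f) p * pv (pv n) p - 2 * pv (pu f) p * pv (pu n) p
                + pv (pv f) p * pu (pu n) p)
            + t ^ 2 * Kgr n p := funext fun t => Kgen_defo f n k hf hn t p
    
      rw [hfn]
      set b := pu (pu f) p * pv (pv n) p - 2 * pv (pu f) p * pv (pu n) p
          + pv (pv f) p * pu (pu n) p with hb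
      have h1 : HasDerivAt (fun t : ℝ => Kgr f p + t * b + t ^ 2 * Kgr n p)
          (0 + 1 * b + (2 * 0 ^ 1) * Kgr n p) 0 := by
        exact (((hasDerivAt_const 0 (Kgr f p)).add ((hasDerivAt_id 0).mul_const b)).add
          ((hasDerivAt_pow 2 0).mul_const (Kgr n p)))
      have := h1.deriv
      rw [this, Kmix, hb]; ring
    constructor
    · intro h p
      have := hd p
      rw [h p] at this
      linarith
    · intro h p
      rw [hd p, h p, mul_zero]

end
end

section
/- Let f, n be smooth with K(F,V) := f_uu n_vv - 2 f_uv n_uv + f_vv n_uu = 0 and let c satisfy c_u = f_u n_uv - f_v n_uu, c_v = f_u n_vv - f_v n_uv. Define C(u,v) = (-n_u, -n_v, c) and C̄(u,v) = (-n_v, n_u, -n + n_u u + n_v v). Then C̄ is a velocity diagram of an infinitesimal isometry of C: the top-view first fundamental form of C + t C̄ is constant to first order at t = 0, and (d/dt) K(C + t C̄)|_{t=0} = n_uv · K(F,V) = 0. -/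
noncomputable section

/-- The rotation diagram `C = (-n_u, -n_v, c)`. -/
def Cdiag (n c : ℝ × ℝ → ℝ) : ℝ × ℝ → ℝ × ℝ × ℝ :=
  fun q => (-pu n q, -pv n q, c q)

/-- The translation diagram `C̄ = (-n_v, n_u, -n + n_u u + n_v v)`. -/
def Cbardiag (n : ℝ × ℝ → ℝ) : ℝ × ℝ → ℝ × ℝ × ℝ :=
  fun q => (-pv n q, pu n q, -n q + pu n q * q.1 + pv n q * q.2)

/-- The deformation `C + t C̄`. -/
def Gfam (n c : ℝ × ℝ → ℝ) (t : ℝ) : ℝ × ℝ → ℝ × ℝ × ℝ :=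
  fun q => ((Cdiag n c q).1 + t * (Cbardiag n q).1,
            (Cdiag n c q).2.1 + t * (Cbardiag n q).2.1,
            (Cdiag n c q).2.2 + t * (Cbardiag n q).2.2)


/-! ### Auxiliary machinery -/

/-- Directional partial derivative. -/
def pd {E : Type*} [NormedAddCommGroup E] [NormedSpace ℝ E]
    (w : ℝ × ℝ) (f : ℝ × ℝ → E) (p : ℝ × ℝ) : E := fderiv ℝ f p w

lemma pu_pd {E : Type*} [NormedAddCommGroup E] [NormedSpace ℝ E] (f : ℝ × ℝ → E) :
    pu f = pd (1, 0) f := rfl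

lemma pv_pd {E : Type*} [NormedAddCommGroup E] [NormedSpace ℝ E] (f : ℝ × ℝ → E) :
    pv f = pd (0, 1) f := rfl

lemma cd_dd {E : Type*} [NormedAddCommGroup E] [NormedSpace ℝ E]
    {f : ℝ × ℝ → E} (hf : ContDiff ℝ (⊤ : ℕ∞) f) (p : ℝ × ℝ) : DifferentiableAt ℝ f p :=
  (hf.differentiable (by simp)).differentiableAt

lemma pd_contDiff {E : Type*} [NormedAddCommGroup E] [NormedSpace ℝ E]
    {f : ℝ × ℝ → E} (hf : ContDiff ℝ (⊤ : ℕ∞) f) (w : ℝ × ℝ) :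
    ContDiff ℝ (⊤ : ℕ∞) (pd w f) := (hf.fderiv_right (by simp)).clm_apply contDiff_const

lemma pd_add {f g : ℝ × ℝ → ℝ} (hf : ContDiff ℝ (⊤ : ℕ∞) f) (hg : ContDiff ℝ (⊤ : ℕ∞) g) (w : ℝ × ℝ) :
    pd w (fun q => f q + g q) = fun q => pd w f q + pd w g q := by
  funext p
  simp only [pd, fderiv_fun_add (cd_dd hf p) (cd_dd hg p), ContinuousLinearMap.add_apply]

lemma pd_sub {f g : ℝ × ℝ → ℝ} (hf : ContDiff ℝ (⊤ : ℕ∞) f) (hg : ContDiff ℝ (⊤ : ℕ∞) g) (w : ℝ × ℝ) :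
    pd w (fun q => f q - g q) = fun q => pd w f q - pd w g q := by
  funext p
  simp only [pd, fderiv_fun_sub (cd_dd hf p) (cd_dd hg p), ContinuousLinearMap.sub_apply]

lemma pd_neg (f : ℝ × ℝ → ℝ) (w : ℝ × ℝ) :
    pd w (fun q => -f q) = fun q => -pd w f q := by
  funext p
  simp only [pd, fderiv_fun_neg, ContinuousLinearMap.neg_apply]

lemma pd_const_mul {f : ℝ × ℝ → ℝ} (hf : ContDiff ℝ (⊤ : ℕ∞) f) (k : ℝ) (w : ℝ × ℝ) :
    pd w (fun q => k * f q) = fun q => k * pd w f q := by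
  funext p
  simp only [pd, fderiv_const_mul (cd_dd hf p) k, ContinuousLinearMap.smul_apply,
    smul_eq_mul]

lemma pd_mul {f g : ℝ × ℝ → ℝ} (hf : ContDiff ℝ (⊤ : ℕ∞) f) (hg : ContDiff ℝ (⊤ : ℕ∞) g) (w : ℝ × ℝ) :
    pd w (fun q => f q * g q) = fun q => pd w f q * g q + f q * pd w g q := by
  funext p
  simp only [pd, fderiv_fun_mul (cd_dd hf p) (cd_dd hg p), ContinuousLinearMap.add_apply,
    ContinuousLinearMap.smul_apply, smul_eq_mul]
  ring

lemma pd_mul_const {f : ℝ × ℝ → ℝ} (hf : ContDiff ℝ (⊤ : ℕ∞) f) (k : ℝ) (w : ℝ × ℝ) :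
    pd w (fun q => f q * k) = fun q => pd w f q * k := by
  funext p
  simp only [pd, fderiv_mul_const (cd_dd hf p) k, ContinuousLinearMap.smul_apply,
    smul_eq_mul]
  ring

lemma pd_fst (w : ℝ × ℝ) : pd w (fun q : ℝ × ℝ => q.1) = fun _ => w.1 := by
  funext p
  simp only [pd]
  rw [show (fun q : ℝ × ℝ => q.1) = Prod.fst from rfl, fderiv_fst]
  rfl

lemma pd_snd (w : ℝ × ℝ) : pd w (fun q : ℝ × ℝ => q.2) = fun _ => w.2 := by
  funext p
  simp only [pd]
  rw [show (fun q : ℝ × ℝ => q.2) = Prod.snd from rfl, fderiv_snd]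
  rfl

lemma pd_pair {E F : Type*} [NormedAddCommGroup E] [NormedSpace ℝ E]
    [NormedAddCommGroup F] [NormedSpace ℝ F]
    {f : ℝ × ℝ → E} {g : ℝ × ℝ → F}
    (hf : ContDiff ℝ (⊤ : ℕ∞) f) (hg : ContDiff ℝ (⊤ : ℕ∞) g) (w : ℝ × ℝ) :
    pd w (fun q => (f q, g q)) = fun q => (pd w f q, pd w g q) := by
  funext p
  simp only [pd]
  rw [DifferentiableAt.fderiv_prodMk (cd_dd hf p) (cd_dd hg p)]
  rfl

lemma pd_comm {E : Type*} [NormedAddCommGroup E] [NormedSpace ℝ E]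
    {f : ℝ × ℝ → E} (hf : ContDiff ℝ (⊤ : ℕ∞) f) (w w' : ℝ × ℝ) :
    pd w (pd w' f) = pd w' (pd w f) := by
  have hdf : Differentiable ℝ (fderiv ℝ f) := (hf.fderiv_right (m := (⊤ : ℕ∞)) (by simp)).differentiable (by simp)
  have key : ∀ a b : ℝ × ℝ, ∀ p : ℝ × ℝ, pd a (pd b f) p = fderiv ℝ (fderiv ℝ f) p a b := by
    intro a b p
    have h : pd b f = fun q => (fderiv ℝ f q) ((fun _ => b) q) := rfl
    rw [pd, h, fderiv_clm_apply (hdf.differentiableAt) (differentiableAt_const b)]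
    simp
  funext p
  rw [key, key]
  exact (hf.contDiffAt.isSymmSndFDerivAt (by rw [minSmoothness_of_isRCLikeNormedField]; exact WithTop.coe_le_coe.mpr (le_top : (2 : ℕ∞) ≤ ⊤))) w w'

/-- Affine line in `ℝ × ℝ × ℝ`. -/
def aff (x y : ℝ × ℝ × ℝ) (t : ℝ) : ℝ × ℝ × ℝ :=
  (x.1 + t * y.1, x.2.1 + t * y.2.1, x.2.2 + t * y.2.2)

lemma hstep {g : ℝ → ℝ} {d : ℝ} (k : ℝ) (hg : HasDerivAt g d 0) :
    HasDerivAt (fun t : ℝ => k + t * g t) (g 0) 0 := by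
  have h := (hasDerivAt_const (0 : ℝ) k).add ((hasDerivAt_id (0 : ℝ)).mul hg)
  exact h.congr_deriv (by simp)

lemma det3_aff (X Y X' Y' X'' Y'' : ℝ × ℝ × ℝ) :
    HasDerivAt (fun t => det3 (aff X Y t) (aff X' Y' t) (aff X'' Y'' t))
      (det3 Y X' X'' + det3 X Y' X'' + det3 X X' Y'') 0 := by
  have h : (fun t => det3 (aff X Y t) (aff X' Y' t) (aff X'' Y'' t))
      = fun t => det3 X X' X'' + t * ((det3 Y X' X'' + det3 X Y' X'' + det3 X X' Y'')
          + t * ((det3 X Y' Y'' + det3 Y X' Y'' + det3 Y Y' X'') + t * det3 Y Y' Y'')) := by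
    funext t
    simp only [det3, aff]
    ring
  rw [h]
  have := hstep (det3 X X' X'')
    (hstep (det3 Y X' X'' + det3 X Y' X'' + det3 X X' Y'')
      (hstep (det3 X Y' Y'' + det3 Y X' Y'' + det3 Y Y' X'')
        (hasDerivAt_const 0 (det3 Y Y' Y''))))
  simpa using this

lemma dot2t_aff (X Y X' Y' : ℝ × ℝ × ℝ) :
    HasDerivAt (fun t => dot2 (tv (aff X Y t)) (tv (aff X' Y' t)))
      (dot2 (tv Y) (tv X') + dot2 (tv X) (tv Y')) 0 := by
  have h : (fun t => dot2 (tv (aff X Y t)) (tv (aff X' Y' t)))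
      = fun t => dot2 (tv X) (tv X') + t * ((dot2 (tv Y) (tv X') + dot2 (tv X) (tv Y'))
          + t * dot2 (tv Y) (tv Y')) := by
    funext t
    simp only [dot2, tv, aff]
    ring
  rw [h]
  have := hstep (dot2 (tv X) (tv X'))
    (hstep (dot2 (tv Y) (tv X') + dot2 (tv X) (tv Y'))
      (hasDerivAt_const 0 (dot2 (tv Y) (tv Y'))))
  simpa using this

lemma pdG {n c : ℝ × ℝ → ℝ} (hn : ContDiff ℝ (⊤ : ℕ∞) n) (hc : ContDiff ℝ (⊤ : ℕ∞) c)
    (w : ℝ × ℝ) (t : ℝ) :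
    pd w (Gfam n c t) = fun q =>
      (-pd w (pd (1, 0) n) q + t * -pd w (pd (0, 1) n) q,
       -pd w (pd (0, 1) n) q + t * pd w (pd (1, 0) n) q,
       pd w c q + t * ((-pd w n q + (pd w (pd (1, 0) n) q * q.1 + pd (1, 0) n q * w.1))
          + (pd w (pd (0, 1) n) q * q.2 + pd (0, 1) n q * w.2))) := by
  have hn10 : ContDiff ℝ (⊤ : ℕ∞) (pd ((1 : ℝ), (0 : ℝ)) n) := pd_contDiff hn _
  have hn01 : ContDiff ℝ (⊤ : ℕ∞) (pd ((0 : ℝ), (1 : ℝ)) n) := pd_contDiff hn _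
  have h1 : ContDiff ℝ (⊤ : ℕ∞) (fun q => -pd (1, 0) n q + t * -pd (0, 1) n q) :=
    hn10.neg.add (contDiff_const.mul hn01.neg)
  have h2 : ContDiff ℝ (⊤ : ℕ∞) (fun q => -pd (0, 1) n q + t * pd (1, 0) n q) :=
    hn01.neg.add (contDiff_const.mul hn10)
  have h3 : ContDiff ℝ (⊤ : ℕ∞) (fun q : ℝ × ℝ =>
      c q + t * (-n q + pd (1, 0) n q * q.1 + pd (0, 1) n q * q.2)) :=
    hc.add (contDiff_const.mul ((hn.neg.add (hn10.mul contDiff_fst)).add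
      (hn01.mul contDiff_snd)))
  have c1 : pd w (fun q => -pd (1, 0) n q + t * -pd (0, 1) n q)
      = fun q => -pd w (pd (1, 0) n) q + t * -pd w (pd (0, 1) n) q := by
    rw [pd_add hn10.neg (contDiff_const.mul hn01.neg), pd_const_mul hn01.neg,
      pd_neg (pd (1, 0) n), pd_neg (pd (0, 1) n)]
  have c2 : pd w (fun q => -pd (0, 1) n q + t * pd (1, 0) n q)
      = fun q => -pd w (pd (0, 1) n) q + t * pd w (pd (1, 0) n) q := by
    rw [pd_add hn01.neg (contDiff_const.mul hn10), pd_const_mul hn10, pd_neg (pd (0, 1) n)]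
  have c3 : pd w (fun q : ℝ × ℝ =>
        c q + t * (-n q + pd (1, 0) n q * q.1 + pd (0, 1) n q * q.2))
      = fun q => pd w c q + t * ((-pd w n q + (pd w (pd (1, 0) n) q * q.1 + pd (1, 0) n q * w.1))
          + (pd w (pd (0, 1) n) q * q.2 + pd (0, 1) n q * w.2)) := by
    rw [pd_add hc (contDiff_const.mul ((hn.neg.add (hn10.mul contDiff_fst)).add
        (hn01.mul contDiff_snd))),
      pd_const_mul ((hn.neg.add (hn10.mul contDiff_fst)).add (hn01.mul contDiff_snd)),
      pd_add (hn.neg.add (hn10.mul contDiff_fst)) (hn01.mul contDiff_snd),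
      pd_add hn.neg (hn10.mul contDiff_fst),
      pd_neg n, pd_mul hn10 contDiff_fst, pd_mul hn01 contDiff_snd, pd_fst, pd_snd]
  calc pd w (Gfam n c t)
      = pd w (fun q : ℝ × ℝ =>
          ((fun q => -pd (1, 0) n q + t * -pd (0, 1) n q) q,
           ((fun q => -pd (0, 1) n q + t * pd (1, 0) n q) q,
            (fun q : ℝ × ℝ =>
              c q + t * (-n q + pd (1, 0) n q * q.1 + pd (0, 1) n q * q.2)) q))) := rfl
    _ = _ := by
        rw [pd_pair h1 (h2.prodMk h3), pd_pair h2 h3, c1, c2, c3]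

lemma pdG2 {n c : ℝ × ℝ → ℝ} (hn : ContDiff ℝ (⊤ : ℕ∞) n) (hc : ContDiff ℝ (⊤ : ℕ∞) c)
    (w' w : ℝ × ℝ) (t : ℝ) :
    pd w' (pd w (Gfam n c t)) = fun q =>
      (-pd w' (pd w (pd (1, 0) n)) q + t * -pd w' (pd w (pd (0, 1) n)) q,
       -pd w' (pd w (pd (0, 1) n)) q + t * pd w' (pd w (pd (1, 0) n)) q,
       pd w' (pd w c) q + t * ((-pd w' (pd w n) q
            + ((pd w' (pd w (pd (1, 0) n)) q * q.1 + pd w (pd (1, 0) n) q * w'.1)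
               + pd w' (pd (1, 0) n) q * w.1))
          + ((pd w' (pd w (pd (0, 1) n)) q * q.2 + pd w (pd (0, 1) n) q * w'.2)
             + pd w' (pd (0, 1) n) q * w.2))) := by
  have hn10 : ContDiff ℝ (⊤ : ℕ∞) (pd ((1 : ℝ), (0 : ℝ)) n) := pd_contDiff hn _
  have hn01 : ContDiff ℝ (⊤ : ℕ∞) (pd ((0 : ℝ), (1 : ℝ)) n) := pd_contDiff hn _
  have hwn : ContDiff ℝ (⊤ : ℕ∞) (pd w n) := pd_contDiff hn _
  have hwc : ContDiff ℝ (⊤ : ℕ∞) (pd w c) := pd_contDiff hc _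
  have hw10 : ContDiff ℝ (⊤ : ℕ∞) (pd w (pd (1, 0) n)) := pd_contDiff hn10 _
  have hw01 : ContDiff ℝ (⊤ : ℕ∞) (pd w (pd (0, 1) n)) := pd_contDiff hn01 _
  have h1 : ContDiff ℝ (⊤ : ℕ∞) (fun q => -pd w (pd (1, 0) n) q + t * -pd w (pd (0, 1) n) q) :=
    hw10.neg.add (contDiff_const.mul hw01.neg)
  have h2 : ContDiff ℝ (⊤ : ℕ∞) (fun q => -pd w (pd (0, 1) n) q + t * pd w (pd (1, 0) n) q) :=
    hw01.neg.add (contDiff_const.mul hw10)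
  have h3a : ContDiff ℝ (⊤ : ℕ∞) (fun q : ℝ × ℝ =>
      -pd w n q + (pd w (pd (1, 0) n) q * q.1 + pd (1, 0) n q * w.1)) :=
    hwn.neg.add ((hw10.mul contDiff_fst).add (hn10.mul contDiff_const))
  have h3b : ContDiff ℝ (⊤ : ℕ∞) (fun q : ℝ × ℝ =>
      pd w (pd (0, 1) n) q * q.2 + pd (0, 1) n q * w.2) :=
    (hw01.mul contDiff_snd).add (hn01.mul contDiff_const)
  have h3 : ContDiff ℝ (⊤ : ℕ∞) (fun q : ℝ × ℝ =>
      pd w c q + t * ((-pd w n q + (pd w (pd (1, 0) n) q * q.1 + pd (1, 0) n q * w.1))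
        + (pd w (pd (0, 1) n) q * q.2 + pd (0, 1) n q * w.2))) :=
    hwc.add (contDiff_const.mul (h3a.add h3b))
  have c1 : pd w' (fun q => -pd w (pd (1, 0) n) q + t * -pd w (pd (0, 1) n) q)
      = fun q => -pd w' (pd w (pd (1, 0) n)) q + t * -pd w' (pd w (pd (0, 1) n)) q := by
    rw [pd_add hw10.neg (contDiff_const.mul hw01.neg), pd_const_mul hw01.neg,
      pd_neg (pd w (pd (1, 0) n)), pd_neg (pd w (pd (0, 1) n))]
  have c2 : pd w' (fun q => -pd w (pd (0, 1) n) q + t * pd w (pd (1, 0) n) q)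
      = fun q => -pd w' (pd w (pd (0, 1) n)) q + t * pd w' (pd w (pd (1, 0) n)) q := by
    rw [pd_add hw01.neg (contDiff_const.mul hw10), pd_const_mul hw10,
      pd_neg (pd w (pd (0, 1) n))]
  have c3 : pd w' (fun q : ℝ × ℝ =>
        pd w c q + t * ((-pd w n q + (pd w (pd (1, 0) n) q * q.1 + pd (1, 0) n q * w.1))
          + (pd w (pd (0, 1) n) q * q.2 + pd (0, 1) n q * w.2)))
      = fun q => pd w' (pd w c) q + t * ((-pd w' (pd w n) q
            + ((pd w' (pd w (pd (1, 0) n)) q * q.1 + pd w (pd (1, 0) n) q * w'.1)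
               + pd w' (pd (1, 0) n) q * w.1))
          + ((pd w' (pd w (pd (0, 1) n)) q * q.2 + pd w (pd (0, 1) n) q * w'.2)
             + pd w' (pd (0, 1) n) q * w.2)) := by
    rw [pd_add hwc (contDiff_const.mul (h3a.add h3b)), pd_const_mul (h3a.add h3b),
      pd_add h3a h3b,
      pd_add hwn.neg ((hw10.mul contDiff_fst).add (hn10.mul contDiff_const)),
      pd_add (hw10.mul contDiff_fst) (hn10.mul contDiff_const),
      pd_add (hw01.mul contDiff_snd) (hn01.mul contDiff_const),
      pd_neg (pd w n), pd_mul hw10 contDiff_fst, pd_mul hw01 contDiff_snd,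
      pd_mul_const hn10 w.1, pd_mul_const hn01 w.2, pd_fst, pd_snd]
  rw [pdG hn hc w t]
  calc pd w' (fun q : ℝ × ℝ =>
      (-pd w (pd (1, 0) n) q + t * -pd w (pd (0, 1) n) q,
       -pd w (pd (0, 1) n) q + t * pd w (pd (1, 0) n) q,
       pd w c q + t * ((-pd w n q + (pd w (pd (1, 0) n) q * q.1 + pd (1, 0) n q * w.1))
          + (pd w (pd (0, 1) n) q * q.2 + pd (0, 1) n q * w.2))))
      = pd w' (fun q : ℝ × ℝ =>
          ((fun q => -pd w (pd (1, 0) n) q + t * -pd w (pd (0, 1) n) q) q,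
           ((fun q => -pd w (pd (0, 1) n) q + t * pd w (pd (1, 0) n) q) q,
            (fun q : ℝ × ℝ =>
              pd w c q + t * ((-pd w n q + (pd w (pd (1, 0) n) q * q.1 + pd (1, 0) n q * w.1))
                + (pd w (pd (0, 1) n) q * q.2 + pd (0, 1) n q * w.2))) q))) := rfl
    _ = _ := by
        rw [pd_pair h1 (h2.prodMk h3), pd_pair h2 h3, c1, c2, c3]

/-- `C̄` is a velocity diagram of an infinitesimal isometry of `C`: the
top-view first fundamental form of `C + t C̄` is constant to first order at
`t = 0`, and `(d/dt) K(C + t C̄)|₀ = n_uv · K(F,V) = 0`, where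
`K(F,V) = f_uu n_vv - 2 f_uv n_uv + f_vv n_uu = 0`. -/
theorem stmt_15 (f n c : ℝ × ℝ → ℝ)
    (hf : ContDiff ℝ (⊤ : ℕ∞) f) (hn : ContDiff ℝ (⊤ : ℕ∞) n) (hc : ContDiff ℝ (⊤ : ℕ∞) c)
    (hKFV : ∀ p : ℝ × ℝ,
      pu (pu f) p * pv (pv n) p - 2 * pv (pu f) p * pv (pu n) p
        + pv (pv f) p * pu (pu n) p = 0)
    (hcu : ∀ p : ℝ × ℝ, pu c p = pu f p * pv (pu n) p - pv f p * pu (pu n) p)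
    (hcv : ∀ p : ℝ × ℝ, pv c p = pu f p * pv (pv n) p - pv f p * pv (pu n) p)
    (hreg : ∀ p : ℝ × ℝ, pu (pu n) p * pv (pv n) p - (pv (pu n) p) ^ 2 ≠ 0) :
    ∀ p : ℝ × ℝ,
      (deriv (fun t => dot2 (tv (pu (Gfam n c t) p)) (tv (pu (Gfam n c t) p))) 0 = 0 ∧
       deriv (fun t => dot2 (tv (pv (Gfam n c t) p)) (tv (pv (Gfam n c t) p))) 0 = 0 ∧
       deriv (fun t => dot2 (tv (pu (Gfam n c t) p)) (tv (pv (Gfam n c t) p))) 0 = 0) ∧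
      deriv (fun t => Kgen (Gfam n c t) p) 0
        = pv (pu n) p *
          (pu (pu f) p * pv (pv n) p - 2 * pv (pu f) p * pv (pu n) p
            + pv (pv f) p * pu (pu n) p) ∧
      deriv (fun t => Kgen (Gfam n c t) p) 0 = 0 := by
  simp only [pu_pd, pv_pd] at hKFV hcu hcv hreg
  intro p
  simp only [pu_pd, pv_pd]
  -- smoothness facts
  have hn10 := pd_contDiff hn ((1 : ℝ), (0 : ℝ))
  have hn01 := pd_contDiff hn ((0 : ℝ), (1 : ℝ))
  have hf10 := pd_contDiff hf ((1 : ℝ), (0 : ℝ))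
  have hf01 := pd_contDiff hf ((0 : ℝ), (1 : ℝ))
  have hn20 := pd_contDiff hn10 ((1 : ℝ), (0 : ℝ))
  have hn11 := pd_contDiff hn10 ((0 : ℝ), (1 : ℝ))
  have hn02 := pd_contDiff hn01 ((0 : ℝ), (1 : ℝ))
  -- second derivatives of c
  have hcuF : pd (1, 0) c = fun q =>
      pd (1, 0) f q * pd (0, 1) (pd (1, 0) n) q
        - pd (0, 1) f q * pd (1, 0) (pd (1, 0) n) q := funext hcu
  have hcvF : pd (0, 1) c = fun q =>
      pd (1, 0) f q * pd (0, 1) (pd (0, 1) n) q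
        - pd (0, 1) f q * pd (0, 1) (pd (1, 0) n) q := funext hcv
  have hA1 : pd (1, 0) (fun q =>
        pd (1, 0) f q * pd (0, 1) (pd (1, 0) n) q
          - pd (0, 1) f q * pd (1, 0) (pd (1, 0) n) q)
      = fun q => (pd (1, 0) (pd (1, 0) f) q * pd (0, 1) (pd (1, 0) n) q
            + pd (1, 0) f q * pd (1, 0) (pd (0, 1) (pd (1, 0) n)) q)
          - (pd (1, 0) (pd (0, 1) f) q * pd (1, 0) (pd (1, 0) n) q
            + pd (0, 1) f q * pd (1, 0) (pd (1, 0) (pd (1, 0) n)) q) := by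
    rw [pd_sub (hf10.mul hn11) (hf01.mul hn20), pd_mul hf10 hn11, pd_mul hf01 hn20]
  have hA2 : pd (0, 1) (fun q =>
        pd (1, 0) f q * pd (0, 1) (pd (1, 0) n) q
          - pd (0, 1) f q * pd (1, 0) (pd (1, 0) n) q)
      = fun q => (pd (0, 1) (pd (1, 0) f) q * pd (0, 1) (pd (1, 0) n) q
            + pd (1, 0) f q * pd (0, 1) (pd (0, 1) (pd (1, 0) n)) q)
          - (pd (0, 1) (pd (0, 1) f) q * pd (1, 0) (pd (1, 0) n) q
            + pd (0, 1) f q * pd (0, 1) (pd (1, 0) (pd (1, 0) n)) q) := by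
    rw [pd_sub (hf10.mul hn11) (hf01.mul hn20), pd_mul hf10 hn11, pd_mul hf01 hn20]
  have hA3 : pd (0, 1) (fun q =>
        pd (1, 0) f q * pd (0, 1) (pd (0, 1) n) q
          - pd (0, 1) f q * pd (0, 1) (pd (1, 0) n) q)
      = fun q => (pd (0, 1) (pd (1, 0) f) q * pd (0, 1) (pd (0, 1) n) q
            + pd (1, 0) f q * pd (0, 1) (pd (0, 1) (pd (0, 1) n)) q)
          - (pd (0, 1) (pd (0, 1) f) q * pd (0, 1) (pd (1, 0) n) q
            + pd (0, 1) f q * pd (0, 1) (pd (0, 1) (pd (1, 0) n)) q) := by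
    rw [pd_sub (hf10.mul hn02) (hf01.mul hn11), pd_mul hf10 hn02, pd_mul hf01 hn11]
  have hcuu : pd (1, 0) (pd (1, 0) c) p
      = (pd (1, 0) (pd (1, 0) f) p * pd (0, 1) (pd (1, 0) n) p
          + pd (1, 0) f p * pd (0, 1) (pd (1, 0) (pd (1, 0) n)) p)
        - (pd (0, 1) (pd (1, 0) f) p * pd (1, 0) (pd (1, 0) n) p
          + pd (0, 1) f p * pd (1, 0) (pd (1, 0) (pd (1, 0) n)) p) := by
    have h := congrFun ((congrArg (pd (1, 0)) hcuF).trans hA1) p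
    rw [pd_comm hf (1, 0) (0, 1), pd_comm hn10 (1, 0) (0, 1)] at h
    exact h
  have hcuv : pd (0, 1) (pd (1, 0) c) p
      = (pd (0, 1) (pd (1, 0) f) p * pd (0, 1) (pd (1, 0) n) p
          + pd (1, 0) f p * pd (0, 1) (pd (0, 1) (pd (1, 0) n)) p)
        - (pd (0, 1) (pd (0, 1) f) p * pd (1, 0) (pd (1, 0) n) p
          + pd (0, 1) f p * pd (0, 1) (pd (1, 0) (pd (1, 0) n)) p) :=
    congrFun ((congrArg (pd (0, 1)) hcuF).trans hA2) p
  have hcvv : pd (0, 1) (pd (0, 1) c) p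
      = (pd (0, 1) (pd (1, 0) f) p * pd (0, 1) (pd (0, 1) n) p
          + pd (1, 0) f p * pd (0, 1) (pd (0, 1) (pd (0, 1) n)) p)
        - (pd (0, 1) (pd (0, 1) f) p * pd (0, 1) (pd (1, 0) n) p
          + pd (0, 1) f p * pd (0, 1) (pd (0, 1) (pd (1, 0) n)) p) :=
    congrFun ((congrArg (pd (0, 1)) hcvF).trans hA3) p
  -- the ten coefficient vectors
  obtain ⟨Xu, hXu⟩ : ∃ x : ℝ × ℝ × ℝ, x =
      (-pd (1, 0) (pd (1, 0) n) p, -pd (0, 1) (pd (1, 0) n) p,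
        pd (1, 0) f p * pd (0, 1) (pd (1, 0) n) p
          - pd (0, 1) f p * pd (1, 0) (pd (1, 0) n) p) := ⟨_, rfl⟩
  obtain ⟨Yu, hYu⟩ : ∃ x : ℝ × ℝ × ℝ, x =
      (-pd (0, 1) (pd (1, 0) n) p, pd (1, 0) (pd (1, 0) n) p,
        pd (1, 0) (pd (1, 0) n) p * p.1 + pd (0, 1) (pd (1, 0) n) p * p.2) := ⟨_, rfl⟩
  obtain ⟨Xv, hXv⟩ : ∃ x : ℝ × ℝ × ℝ, x =
      (-pd (0, 1) (pd (1, 0) n) p, -pd (0, 1) (pd (0, 1) n) p,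
        pd (1, 0) f p * pd (0, 1) (pd (0, 1) n) p
          - pd (0, 1) f p * pd (0, 1) (pd (1, 0) n) p) := ⟨_, rfl⟩
  obtain ⟨Yv, hYv⟩ : ∃ x : ℝ × ℝ × ℝ, x =
      (-pd (0, 1) (pd (0, 1) n) p, pd (0, 1) (pd (1, 0) n) p,
        pd (0, 1) (pd (1, 0) n) p * p.1 + pd (0, 1) (pd (0, 1) n) p * p.2) := ⟨_, rfl⟩
  obtain ⟨Xuu, hXuu⟩ : ∃ x : ℝ × ℝ × ℝ, x =
      (-pd (1, 0) (pd (1, 0) (pd (1, 0) n)) p, -pd (0, 1) (pd (1, 0) (pd (1, 0) n)) p,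
        (pd (1, 0) (pd (1, 0) f) p * pd (0, 1) (pd (1, 0) n) p
          + pd (1, 0) f p * pd (0, 1) (pd (1, 0) (pd (1, 0) n)) p)
        - (pd (0, 1) (pd (1, 0) f) p * pd (1, 0) (pd (1, 0) n) p
          + pd (0, 1) f p * pd (1, 0) (pd (1, 0) (pd (1, 0) n)) p)) := ⟨_, rfl⟩
  obtain ⟨Yuu, hYuu⟩ : ∃ x : ℝ × ℝ × ℝ, x =
      (-pd (0, 1) (pd (1, 0) (pd (1, 0) n)) p, pd (1, 0) (pd (1, 0) (pd (1, 0) n)) p,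
        pd (1, 0) (pd (1, 0) n) p
          + (pd (1, 0) (pd (1, 0) (pd (1, 0) n)) p * p.1
            + pd (0, 1) (pd (1, 0) (pd (1, 0) n)) p * p.2)) := ⟨_, rfl⟩
  obtain ⟨Xuv, hXuv⟩ : ∃ x : ℝ × ℝ × ℝ, x =
      (-pd (0, 1) (pd (1, 0) (pd (1, 0) n)) p, -pd (0, 1) (pd (0, 1) (pd (1, 0) n)) p,
        (pd (0, 1) (pd (1, 0) f) p * pd (0, 1) (pd (1, 0) n) p
          + pd (1, 0) f p * pd (0, 1) (pd (0, 1) (pd (1, 0) n)) p)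
        - (pd (0, 1) (pd (0, 1) f) p * pd (1, 0) (pd (1, 0) n) p
          + pd (0, 1) f p * pd (0, 1) (pd (1, 0) (pd (1, 0) n)) p)) := ⟨_, rfl⟩
  obtain ⟨Yuv, hYuv⟩ : ∃ x : ℝ × ℝ × ℝ, x =
      (-pd (0, 1) (pd (0, 1) (pd (1, 0) n)) p, pd (0, 1) (pd (1, 0) (pd (1, 0) n)) p,
        pd (0, 1) (pd (1, 0) n) p
          + (pd (0, 1) (pd (1, 0) (pd (1, 0) n)) p * p.1
            + pd (0, 1) (pd (0, 1) (pd (1, 0) n)) p * p.2)) := ⟨_, rfl⟩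
  obtain ⟨Xvv, hXvv⟩ : ∃ x : ℝ × ℝ × ℝ, x =
      (-pd (0, 1) (pd (0, 1) (pd (1, 0) n)) p, -pd (0, 1) (pd (0, 1) (pd (0, 1) n)) p,
        (pd (0, 1) (pd (1, 0) f) p * pd (0, 1) (pd (0, 1) n) p
          + pd (1, 0) f p * pd (0, 1) (pd (0, 1) (pd (0, 1) n)) p)
        - (pd (0, 1) (pd (0, 1) f) p * pd (0, 1) (pd (1, 0) n) p
          + pd (0, 1) f p * pd (0, 1) (pd (0, 1) (pd (1, 0) n)) p)) := ⟨_, rfl⟩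
  obtain ⟨Yvv, hYvv⟩ : ∃ x : ℝ × ℝ × ℝ, x =
      (-pd (0, 1) (pd (0, 1) (pd (0, 1) n)) p, pd (0, 1) (pd (0, 1) (pd (1, 0) n)) p,
        pd (0, 1) (pd (0, 1) n) p
          + (pd (0, 1) (pd (0, 1) (pd (1, 0) n)) p * p.1
            + pd (0, 1) (pd (0, 1) (pd (0, 1) n)) p * p.2)) := ⟨_, rfl⟩
  -- first derivatives of the family
  have hPu : ∀ t : ℝ, pd (1, 0) (Gfam n c t) p = aff Xu Yu t := by
    intro t
    rw [congrFun (pdG hn hc (1, 0) t) p, hXu, hYu]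
    simp only [pd_comm hn (1, 0) (0, 1), hcu, aff, Prod.mk.injEq]
    refine ⟨trivial, trivial, by ring⟩
  have hPv : ∀ t : ℝ, pd (0, 1) (Gfam n c t) p = aff Xv Yv t := by
    intro t
    rw [congrFun (pdG hn hc (0, 1) t) p, hXv, hYv]
    simp only [hcv, aff, Prod.mk.injEq]
    refine ⟨trivial, trivial, by ring⟩
  -- second derivatives of the family
  have hPuu : ∀ t : ℝ, pd (1, 0) (pd (1, 0) (Gfam n c t)) p = aff Xuu Yuu t := by
    intro t
    rw [congrFun (pdG2 hn hc (1, 0) (1, 0) t) p, hXuu, hYuu]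
    simp only [pd_comm hn (1, 0) (0, 1), pd_comm hn10 (1, 0) (0, 1), hcuu, aff,
      Prod.mk.injEq]
    refine ⟨trivial, trivial, by ring⟩
  have hPuv : ∀ t : ℝ, pd (0, 1) (pd (1, 0) (Gfam n c t)) p = aff Xuv Yuv t := by
    intro t
    rw [congrFun (pdG2 hn hc (0, 1) (1, 0) t) p, hXuv, hYuv]
    simp only [pd_comm hn (1, 0) (0, 1), hcuv, aff, Prod.mk.injEq]
    refine ⟨trivial, trivial, by ring⟩
  have hPvv : ∀ t : ℝ, pd (0, 1) (pd (0, 1) (Gfam n c t)) p = aff Xvv Yvv t := by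
    intro t
    rw [congrFun (pdG2 hn hc (0, 1) (0, 1) t) p, hXvv, hYvv]
    simp only [pd_comm hn (1, 0) (0, 1), hcvv, aff, Prod.mk.injEq]
    refine ⟨trivial, trivial, by ring⟩
  -- derivative machinery at t = 0
  have hQ1 := det3_aff Xu Yu Xv Yv Xuu Yuu
  have hQ2 := det3_aff Xu Yu Xv Yv Xvv Yvv
  have hQ3 := det3_aff Xu Yu Xv Yv Xuv Yuv
  have hEE := dot2t_aff Xu Yu Xu Yu
  have hGG := dot2t_aff Xv Yv Xv Yv
  have hFF := dot2t_aff Xu Yu Xv Yv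
  have hne : dot2 (tv (aff Xu Yu 0)) (tv (aff Xu Yu 0))
        * dot2 (tv (aff Xv Yv 0)) (tv (aff Xv Yv 0))
      - dot2 (tv (aff Xu Yu 0)) (tv (aff Xv Yv 0)) ^ 2 ≠ 0 := by
    have h0 : dot2 (tv (aff Xu Yu 0)) (tv (aff Xu Yu 0))
          * dot2 (tv (aff Xv Yv 0)) (tv (aff Xv Yv 0))
        - dot2 (tv (aff Xu Yu 0)) (tv (aff Xv Yv 0)) ^ 2
        = (pd (1, 0) (pd (1, 0) n) p * pd (0, 1) (pd (0, 1) n) p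
            - pd (0, 1) (pd (1, 0) n) p ^ 2) ^ 2 := by
      rw [hXu, hYu, hXv, hYv]
      simp only [dot2, tv, aff]
      ring
    rw [h0]
    exact pow_ne_zero 2 (hreg p)
  have big : deriv (fun t => Kgen (Gfam n c t) p) 0
      = pd (0, 1) (pd (1, 0) n) p *
          (pd (1, 0) (pd (1, 0) f) p * pd (0, 1) (pd (0, 1) n) p
            - 2 * pd (0, 1) (pd (1, 0) f) p * pd (0, 1) (pd (1, 0) n) p
            + pd (0, 1) (pd (0, 1) f) p * pd (1, 0) (pd (1, 0) n) p) := by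
    simp only [Kgen, pu_pd, pv_pd, hPu, hPv, hPuu, hPuv, hPvv]
    have hKd : HasDerivAt (fun t =>
        (det3 (aff Xu Yu t) (aff Xv Yv t) (aff Xuu Yuu t)
            * det3 (aff Xu Yu t) (aff Xv Yv t) (aff Xvv Yvv t)
          - det3 (aff Xu Yu t) (aff Xv Yv t) (aff Xuv Yuv t) ^ 2)
        / (dot2 (tv (aff Xu Yu t)) (tv (aff Xu Yu t))
            * dot2 (tv (aff Xv Yv t)) (tv (aff Xv Yv t))
          - dot2 (tv (aff Xu Yu t)) (tv (aff Xv Yv t)) ^ 2))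
      ((((det3 Yu Xv Xuu + det3 Xu Yv Xuu + det3 Xu Xv Yuu)
            * det3 (aff Xu Yu 0) (aff Xv Yv 0) (aff Xvv Yvv 0)
          + det3 (aff Xu Yu 0) (aff Xv Yv 0) (aff Xuu Yuu 0)
            * (det3 Yu Xv Xvv + det3 Xu Yv Xvv + det3 Xu Xv Yvv)
          - ((2 : ℕ) : ℝ) * det3 (aff Xu Yu 0) (aff Xv Yv 0) (aff Xuv Yuv 0) ^ 1
            * (det3 Yu Xv Xuv + det3 Xu Yv Xuv + det3 Xu Xv Yuv))
          * (dot2 (tv (aff Xu Yu 0)) (tv (aff Xu Yu 0))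
              * dot2 (tv (aff Xv Yv 0)) (tv (aff Xv Yv 0))
            - dot2 (tv (aff Xu Yu 0)) (tv (aff Xv Yv 0)) ^ 2)
        - (det3 (aff Xu Yu 0) (aff Xv Yv 0) (aff Xuu Yuu 0)
            * det3 (aff Xu Yu 0) (aff Xv Yv 0) (aff Xvv Yvv 0)
          - det3 (aff Xu Yu 0) (aff Xv Yv 0) (aff Xuv Yuv 0) ^ 2)
          * ((dot2 (tv Yu) (tv Xu) + dot2 (tv Xu) (tv Yu))
              * dot2 (tv (aff Xv Yv 0)) (tv (aff Xv Yv 0))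
            + dot2 (tv (aff Xu Yu 0)) (tv (aff Xu Yu 0))
              * (dot2 (tv Yv) (tv Xv) + dot2 (tv Xv) (tv Yv))
            - ((2 : ℕ) : ℝ) * dot2 (tv (aff Xu Yu 0)) (tv (aff Xv Yv 0)) ^ 1
              * (dot2 (tv Yu) (tv Xv) + dot2 (tv Xu) (tv Yv))))
        / (dot2 (tv (aff Xu Yu 0)) (tv (aff Xu Yu 0))
            * dot2 (tv (aff Xv Yv 0)) (tv (aff Xv Yv 0))
          - dot2 (tv (aff Xu Yu 0)) (tv (aff Xv Yv 0)) ^ 2) ^ 2) 0 := by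
      exact ((hQ1.mul hQ2).sub (hQ3.pow 2)).div ((hEE.mul hGG).sub (hFF.pow 2)) hne
    rw [hKd.deriv]
    have hD0 : (dot2 (tv Yu) (tv Xu) + dot2 (tv Xu) (tv Yu))
          * dot2 (tv (aff Xv Yv 0)) (tv (aff Xv Yv 0))
        + dot2 (tv (aff Xu Yu 0)) (tv (aff Xu Yu 0))
          * (dot2 (tv Yv) (tv Xv) + dot2 (tv Xv) (tv Yv))
        - ((2 : ℕ) : ℝ) * dot2 (tv (aff Xu Yu 0)) (tv (aff Xv Yv 0)) ^ 1
          * (dot2 (tv Yu) (tv Xv) + dot2 (tv Xu) (tv Yv)) = 0 := by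
      rw [hXu, hYu, hXv, hYv]
      simp only [dot2, tv, aff]
      push_cast
      ring
    rw [hD0, mul_zero, sub_zero]
    have hcan : ∀ A R D : ℝ, D ≠ 0 → A = R * D → A * D / D ^ 2 = R := by
      intro A R D hD hAR
      rw [hAR]
      field_simp
    refine hcan _ _ _ hne ?_
    rw [hXu, hYu, hXv, hYv, hXuu, hYuu, hXuv, hYuv, hXvv, hYvv]
    simp only [det3, dot2, tv, aff]
    push_cast
    ring
  refine ⟨⟨?_, ?_, ?_⟩, big, by rw [big, hKFV p, mul_zero]⟩
  · simp only [hPu]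
    rw [(dot2t_aff Xu Yu Xu Yu).deriv, hXu, hYu]
    simp only [dot2, tv]
    ring
  · simp only [hPv]
    rw [(dot2t_aff Xv Yv Xv Yv).deriv, hXv, hYv]
    simp only [dot2, tv]
    ring
  · simp only [hPu, hPv]
    rw [(dot2t_aff Xu Yu Xv Yv).deriv, hXu, hYu, hXv, hYv]
    simp only [dot2, tv]
    ring

end
end

section
/- Let V = (-v,u,n) and F = (u,v,f) be graphs over a common domain. Then the surfaces F⁺ = (u,v,f+n) and F⁻ = (u,v,f-n) have equal isotropic Gaussian curvature at every point if and only if f_uu n_vv - 2 f_uv n_uv + f_vv n_uu = 0 everywhere (i.e., V is a velocity diagram of an infinitesimal isometry of F). -/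
noncomputable section

lemma contDiff_pu {f : ℝ × ℝ → ℝ} (hf : ContDiff ℝ (⊤ : ℕ∞) f) : ContDiff ℝ (⊤ : ℕ∞) (pu f) := by
  have : ContDiff ℝ (⊤ : ℕ∞) (fderiv ℝ f) := hf.fderiv_right (by simp)
  exact this.clm_apply contDiff_const

lemma contDiff_pv {f : ℝ × ℝ → ℝ} (hf : ContDiff ℝ (⊤ : ℕ∞) f) : ContDiff ℝ (⊤ : ℕ∞) (pv f) := by
  have : ContDiff ℝ (⊤ : ℕ∞) (fderiv ℝ f) := hf.fderiv_right (by simp)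
  exact this.clm_apply contDiff_const

lemma pu_add {f n : ℝ × ℝ → ℝ} (hf : Differentiable ℝ f) (hn : Differentiable ℝ n) :
    pu (fun q => f q + n q) = fun p => pu f p + pu n p := by
  funext p
  simp [pu, fderiv_fun_add (hf p) (hn p)]

lemma pu_sub {f n : ℝ × ℝ → ℝ} (hf : Differentiable ℝ f) (hn : Differentiable ℝ n) :
    pu (fun q => f q - n q) = fun p => pu f p - pu n p := by
  funext p
  simp [pu, fderiv_fun_sub (hf p) (hn p)]

lemma pv_add {f n : ℝ × ℝ → ℝ} (hf : Differentiable ℝ f) (hn : Differentiable ℝ n) :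
    pv (fun q => f q + n q) = fun p => pv f p + pv n p := by
  funext p
  simp [pv, fderiv_fun_add (hf p) (hn p)]

lemma pv_sub {f n : ℝ × ℝ → ℝ} (hf : Differentiable ℝ f) (hn : Differentiable ℝ n) :
    pv (fun q => f q - n q) = fun p => pv f p - pv n p := by
  funext p
  simp [pv, fderiv_fun_sub (hf p) (hn p)]

/-- The surfaces `F⁺ = (u,v,f+n)` and `F⁻ = (u,v,f-n)` have equal isotropic
Gaussian curvature at every point iff
`f_uu n_vv - 2 f_uv n_uv + f_vv n_uu = 0` everywhere, i.e. iff
`V = (-v,u,n)` is a velocity diagram of an infinitesimal isometry of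
`F = (u,v,f)`. -/
theorem stmt_18 (f n : ℝ × ℝ → ℝ)
    (hf : ContDiff ℝ (⊤ : ℕ∞) f) (hn : ContDiff ℝ (⊤ : ℕ∞) n) :
    (∀ p : ℝ × ℝ,
      Kgr (fun q => f q + n q) p = Kgr (fun q => f q - n q) p) ↔
    (∀ p : ℝ × ℝ,
      pu (pu f) p * pv (pv n) p - 2 * pv (pu f) p * pv (pu n) p
        + pv (pv f) p * pu (pu n) p = 0) := by
  have hfd : Differentiable ℝ f := hf.differentiable (by simp)
  have hnd : Differentiable ℝ n := hn.differentiable (by simp)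
  have hpuf : Differentiable ℝ (pu f) := (contDiff_pu hf).differentiable (by simp)
  have hpun : Differentiable ℝ (pu n) := (contDiff_pu hn).differentiable (by simp)
  have hpvf : Differentiable ℝ (pv f) := (contDiff_pv hf).differentiable (by simp)
  have hpvn : Differentiable ℝ (pv n) := (contDiff_pv hn).differentiable (by simp)
  have key : ∀ p, Kgr (fun q => f q + n q) p - Kgr (fun q => f q - n q) p =
      2 * (pu (pu f) p * pv (pv n) p - 2 * pv (pu f) p * pv (pu n) p
        + pv (pv f) p * pu (pu n) p) := by
    intro p
    have h1 : pu (pu (fun q => f q + n q)) p = pu (pu f) p + pu (pu n) p := by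
      rw [pu_add hfd hnd, pu_add hpuf hpun]
    have h2 : pv (pv (fun q => f q + n q)) p = pv (pv f) p + pv (pv n) p := by
      rw [pv_add hfd hnd, pv_add hpvf hpvn]
    have h3 : pv (pu (fun q => f q + n q)) p = pv (pu f) p + pv (pu n) p := by
      rw [pu_add hfd hnd, pv_add hpuf hpun]
    have h4 : pu (pu (fun q => f q - n q)) p = pu (pu f) p - pu (pu n) p := by
      rw [pu_sub hfd hnd, pu_sub hpuf hpun]
    have h5 : pv (pv (fun q => f q - n q)) p = pv (pv f) p - pv (pv n) p := by
      rw [pv_sub hfd hnd, pv_sub hpvf hpvn]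
    have h6 : pv (pu (fun q => f q - n q)) p = pv (pu f) p - pv (pu n) p := by
      rw [pu_sub hfd hnd, pv_sub hpuf hpun]
    simp only [Kgr, h1, h2, h3, h4, h5, h6]
    ring
  constructor
  · intro h p
    have := key p
    rw [h p, sub_self] at this
    linarith
  · intro h p
    have := key p
    rw [h p] at this
    linarith

end
end
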